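/- For every k ≥ 1 and every non-prime integer n with k ≤ n ≤ 6k, p(k,n) < (1/3)·(5/6)^{π(n)}, where π(n) denotes the number of primes strictly less than n. -/

import Mathlib

/-! The bound `p(k,n) ≤ (3/10)(5/6)^π(n)` holds for every `n`, by induction on `k ≥ 1`; at `k = 1`
it reads `1/6 ≤ (3/10)(5/6)^3`. A run that is at `n` at time `k+1` was at a non-prime
`m ∈ [n-6, n)` at time `k`, and the last die is independent of the past, so
`p(k+1,n) ≤ (1/6) ∑ p(k,m)`. If the window `[n-6, n)` contains `s` primes, it contains at most
`6 - s` such `m`, each with `π(m) ≥ π(n) - s`, and Bernoulli's inequality `6 - s ≤ 6 (5/6)^s`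
closes the induction. -/

open MeasureTheory ProbabilityTheory

/-- Sum of the first `n` dice. -/
def diceSum {Ω : Type*} (X : ℕ → Ω → ℕ) (n : ℕ) (ω : Ω) : ℕ :=
  ∑ i ∈ Finset.range n, X i ω

/-- `p(k,n)`: probability that `S_k = n` and `S_i` is not prime for all `1 ≤ i < k`. -/
noncomputable def hitProb {Ω : Type*} [MeasurableSpace Ω] (μ : Measure Ω)
    (X : ℕ → Ω → ℕ) (k n : ℕ) : ℝ :=
  (μ {ω | diceSum X k ω = n ∧ ∀ i, 1 ≤ i → i < k → ¬ (diceSum X i ω).Prime}).toReal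

open Finset

namespace Nat

theorem count_eq_count_add_card_filter_Ico (P : ℕ → Prop) [DecidablePred P] {m n : ℕ}
    (h : m ≤ n) : count P n = count P m + #{x ∈ Ico m n | P x} := by
  rw [count_eq_card_filter_range, count_eq_card_filter_range, range_eq_Ico, range_eq_Ico,
    ← Ico_union_Ico_eq_Ico (zero_le m) h, filter_union,
    card_union_of_disjoint (disjoint_filter_filter (Ico_disjoint_Ico_consecutive 0 m n))]

theorem sum_pow_count_filter_not_Ico_le (P : ℕ → Prop) [DecidablePred P] (L n : ℕ) {q : ℝ}
    (hq₀ : 0 < q) (hq₁ : q ≤ 1) (hLq : L * (1 - q) ≤ 1) :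
    ∑ m ∈ Ico (n - L) n with ¬ P m, q ^ count P m ≤ L * q ^ count P n := by
  set W := Ico (n - L) n
  set s := #{m ∈ W | P m}
  have hterm : ∀ m ∈ W, q ^ count P m * q ^ s ≤ q ^ count P n := by
    intro m hm
    rw [← pow_add]
    apply pow_le_pow_of_le_one hq₀.le hq₁
    rw [count_eq_count_add_card_filter_Ico P (mem_Ico.1 hm).2.le]
    gcongr
    exact card_le_card (filter_subset_filter _ (Ico_subset_Ico_left (mem_Ico.1 hm).1))
  have hcard : (#{m ∈ W | ¬ P m} : ℝ) ≤ L - s := by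
    have hsplit : s + #{m ∈ W | ¬ P m} = #W := card_filter_add_card_filter_not P
    have hW : #W ≤ L := by simp only [W, card_Ico]; omega
    rw [le_sub_iff_add_le]; exact_mod_cast (by omega : #{m ∈ W | ¬ P m} + s ≤ L)
  have hbernoulli : (L : ℝ) - s ≤ L * q ^ s := by
    have := one_add_mul_le_pow (a := q - 1) (by linarith) s
    rw [add_sub_cancel] at this
    nlinarith [s.cast_nonneg (α := ℝ)]
  refine le_of_mul_le_mul_right ?_ (pow_pos hq₀ s)
  calc (∑ m ∈ W with ¬ P m, q ^ count P m) * q ^ s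
      ≤ #{m ∈ W | ¬ P m} * q ^ count P n := by
        rw [sum_mul, ← nsmul_eq_mul]
        exact sum_le_card_nsmul _ _ _ fun m hm => hterm m (mem_filter.1 hm).1
    _ ≤ L * q ^ count P n * q ^ s := by
        rw [mul_right_comm]; gcongr; exact hcard.trans hbernoulli

end Nat

theorem ProbabilityTheory.iIndepFun.measure_inter_preimage_eq_mul_of_measurableSet_iSup
    {Ω ι β : Type*} [MeasurableSpace Ω] {μ : Measure Ω} [MeasurableSpace β] {X : ι → Ω → β}
    (hmeas : ∀ i, Measurable (X i)) (hindep : iIndepFun X μ) {S : Set ι} {k : ι} (hk : k ∉ S)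
    {A : Set Ω} (hA : MeasurableSet[⨆ i ∈ S, MeasurableSpace.comap (X i) ‹_›] A)
    {T : Set β} (hT : MeasurableSet T) :
    μ (A ∩ X k ⁻¹' T) = μ A * μ (X k ⁻¹' T) := by
  have h := indep_iSup_of_disjoint (fun i => (hmeas i).comap_le)
    ((iIndepFun_iff_iIndep _ _ _).1 hindep) (Set.disjoint_singleton_right.2 hk)
  refine (Indep_iff _ _ _).1 h _ _ hA ?_
  rw [_root_.iSup_singleton]
  exact ⟨T, hT, rfl⟩

section Dice

variable {Ω : Type*} {X : ℕ → Ω → ℕ}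

def hitEvent (X : ℕ → Ω → ℕ) (k n : ℕ) : Set Ω :=
  {ω | diceSum X k ω = n ∧ ∀ i, 1 ≤ i → i < k → ¬ (diceSum X i ω).Prime}

theorem diceSum_succ (k : ℕ) (ω : Ω) : diceSum X (k + 1) ω = diceSum X k ω + X k ω :=
  sum_range_succ _ _

theorem measurable_diceSum_of_le {i k : ℕ} (hik : i ≤ k) :
    Measurable[⨆ j ∈ Set.Iio k, MeasurableSpace.comap (X j) inferInstance] (diceSum X i) := by
  refine Finset.measurable_sum _ fun j hj => (comap_measurable (X j)).mono ?_ le_rfl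
  exact le_biSup (fun j => MeasurableSpace.comap (X j) inferInstance)
    (Set.mem_Iio.2 ((mem_range.1 hj).trans_le hik))

theorem measurableSet_hitEvent (k n : ℕ) :
    MeasurableSet[⨆ j ∈ Set.Iio k, MeasurableSpace.comap (X j) inferInstance]
      (hitEvent X k n) := by
  let : MeasurableSpace Ω := ⨆ j ∈ Set.Iio k, MeasurableSpace.comap (X j) inferInstance
  refine measurableSet_setOfPred.2 (Measurable.and
    ((measurable_from_nat (f := (· = n))).comp (measurable_diceSum_of_le le_rfl))
    (Measurable.forall fun i => ?_))
  by_cases hik : i < k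
  · exact measurable_const.imp (measurable_const.imp
      ((measurable_from_nat (f := fun m => ¬ m.Prime)).comp (measurable_diceSum_of_le hik.le)))
  · simp only [hik, false_imp_iff, imp_true_iff]
    exact measurable_const

theorem hitEvent_succ_subset (hrange : ∀ i ω, X i ω ∈ Icc 1 6) (k n : ℕ) :
    hitEvent X (k + 1) n ⊆
      ⋃ m ∈ (Ico (n - 6) n).filter (fun m => ¬ m.Prime), hitEvent X k m ∩ X k ⁻¹' {n - m} := by
  rintro ω ⟨hsum, hprime⟩
  have hX := mem_Icc.1 (hrange k ω)
  rw [diceSum_succ] at hsum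
  simp only [Set.mem_iUnion, Set.mem_inter_iff, Set.mem_preimage, Set.mem_singleton_iff,
    exists_prop, mem_filter, mem_Ico]
  refine ⟨diceSum X k ω, ⟨⟨by omega, by omega⟩, ?_⟩,
    ⟨rfl, fun i hi hik => hprime i hi (by omega)⟩, by omega⟩
  rcases k.eq_zero_or_pos with rfl | hk
  · exact Nat.not_prime_zero
  · exact hprime k hk k.lt_succ_self

variable [MeasurableSpace Ω] {μ : Measure Ω}

theorem hitProb_eq_measureReal (k n : ℕ) : hitProb μ X k n = μ.real (hitEvent X k n) := rfl

variable (hmeas : ∀ i, Measurable (X i)) (hindep : iIndepFun X μ)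
  (hunif : ∀ i v, v ∈ Icc 1 6 → μ {ω | X i ω = v} = 1/6) (hrange : ∀ i ω, X i ω ∈ Icc 1 6)
include hunif hrange

theorem hitProb_one_le (n : ℕ) :
    hitProb μ X 1 n ≤ 3 / 10 * (5 / 6 : ℝ) ^ Nat.primeCounting' n := by
  have hevent : hitEvent X 1 n = {ω | X 0 ω = n} := by
    ext ω
    simp only [hitEvent, diceSum, sum_range_one, Set.mem_ofPred_eq]
    exact and_iff_left fun i hi₁ hi₂ => absurd hi₂ (by omega)
  rw [hitProb_eq_measureReal, hevent, measureReal_def]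
  by_cases hn : n ∈ Icc 1 6
  · have hπ : Nat.primeCounting' n ≤ 3 :=
      (Nat.monotone_primeCounting' (mem_Icc.1 hn).2).trans (by decide)
    calc (μ {ω | X 0 ω = n}).toReal = 1 / 6 := by simp [hunif 0 n hn]
      _ ≤ 3 / 10 * (5 / 6 : ℝ) ^ 3 := by norm_num
      _ ≤ 3 / 10 * (5 / 6 : ℝ) ^ Nat.primeCounting' n := by
        gcongr 3 / 10 * ?_
        exact pow_le_pow_of_le_one (by norm_num) (by norm_num) hπ
  · have hempty : {ω | X 0 ω = n} = ∅ :=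
      Set.eq_empty_of_forall_notMem fun ω hω => hn (hω ▸ hrange 0 ω)
    rw [hempty, measure_empty, ENNReal.toReal_zero]
    positivity

include hmeas hindep

theorem hitProb_succ_le [IsFiniteMeasure μ] (k n : ℕ) :
    hitProb μ X (k + 1) n ≤ ∑ m ∈ Ico (n - 6) n with ¬ m.Prime, hitProb μ X k m / 6 := by
  calc hitProb μ X (k + 1) n
      ≤ ∑ m ∈ Ico (n - 6) n with ¬ m.Prime, μ.real (hitEvent X k m ∩ X k ⁻¹' {n - m}) :=
        (measureReal_mono (hitEvent_succ_subset hrange k n) (measure_ne_top _ _)).trans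
          (measureReal_biUnion_finset_le _ _)
    _ = ∑ m ∈ Ico (n - 6) n with ¬ m.Prime, hitProb μ X k m / 6 := by
        refine sum_congr rfl fun m hm => ?_
        have hmW := mem_Ico.1 (mem_filter.1 hm).1
        have hind := hindep.measure_inter_preimage_eq_mul_of_measurableSet_iSup hmeas
          Set.self_notMem_Iio (measurableSet_hitEvent (X := X) k m) (measurableSet_singleton (n - m))
        have hX : μ (X k ⁻¹' {n - m}) = 1 / 6 := hunif k (n - m) (mem_Icc.2 ⟨by omega, by omega⟩)
        rw [measureReal_def, hind, hX, hitProb_eq_measureReal, measureReal_def, ENNReal.toReal_mul]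
        simp [div_eq_mul_inv]

theorem hitProb_le [IsFiniteMeasure μ] {k : ℕ} (hk : 1 ≤ k) (n : ℕ) :
    hitProb μ X k n ≤ 3 / 10 * (5 / 6 : ℝ) ^ Nat.primeCounting' n := by
  induction k, hk using Nat.le_induction generalizing n with
  | base => exact hitProb_one_le hunif hrange n
  | succ k _ ih =>
    have hwindow : ∑ m ∈ Ico (n - 6) n with ¬ m.Prime, (5 / 6 : ℝ) ^ Nat.primeCounting' m
        ≤ 6 * (5 / 6) ^ Nat.primeCounting' n := by
      exact_mod_cast Nat.sum_pow_count_filter_not_Ico_le Nat.Prime 6 n (q := 5 / 6)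
        (by norm_num) (by norm_num) (by norm_num)
    calc hitProb μ X (k + 1) n
        ≤ ∑ m ∈ Ico (n - 6) n with ¬ m.Prime, hitProb μ X k m / 6 :=
          hitProb_succ_le hmeas hindep hunif hrange k n
      _ ≤ ∑ m ∈ Ico (n - 6) n with ¬ m.Prime,
            3 / 10 * (5 / 6 : ℝ) ^ Nat.primeCounting' m / 6 := by
          gcongr with m; exact ih m
      _ ≤ 3 / 10 * (5 / 6 : ℝ) ^ Nat.primeCounting' n := by
          rw [← sum_div, ← mul_sum]
          linarith

end Dice

/-- For every `k ≥ 1` and non-prime `n` with `k ≤ n ≤ 6k`,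
`p(k,n) < (1/3)·(5/6)^{π(n)}`, where `π(n)` counts primes strictly below `n`. -/
theorem hitProb_lt
    {Ω : Type*} [MeasurableSpace Ω] (μ : Measure Ω) [IsProbabilityMeasure μ]
    (X : ℕ → Ω → ℕ) (hmeas : ∀ i, Measurable (X i))
    (hindep : iIndepFun X μ)
    (hunif : ∀ i v, v ∈ Finset.Icc 1 6 → μ {ω | X i ω = v} = 1/6)
    (hrange : ∀ i ω, X i ω ∈ Finset.Icc 1 6) :
    ∀ k n : ℕ, 1 ≤ k → ¬ n.Prime → k ≤ n → n ≤ 6 * k →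
      hitProb μ X k n < (1/3) * (5/6 : ℝ) ^ (Nat.primeCounting' n) := by
  intro k n hk _ _ _
  calc hitProb μ X k n ≤ 3 / 10 * (5 / 6 : ℝ) ^ Nat.primeCounting' n :=
        hitProb_le hmeas hindep hunif hrange hk n
    _ < 1 / 3 * (5 / 6 : ℝ) ^ Nat.primeCounting' n :=
        mul_lt_mul_of_pos_right (by norm_num) (by positivity)
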